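/- Let c ∈ H^*(C) be homogeneous. Then: (i) the sequence 0 → H^*(C)/(c·H^*(C)) → H^*(cone(l_{s(c)})) → Ann_{H^*(C)}(c) → 0, whose first map is induced by the inclusion C → cone(l_{s(c)}) and whose second map is induced by the projection cone(l_{s(c)}) → C[|c|−1], is a short exact sequence of right H^*(C)-modules; (ii) the map β : Ann_{H^*(C)}(c) × H^*(C) → H^*(C)/(c·H^*(C)) sending (x, y) to the class of θ(c,x,y) modulo c·H^*(C) is well defined on homogeneous elements and satisfies β(x, yz) = β(xy, z) + β(x, y)z; and (iii) there is an isomorphism of right H^*(C)-modules from E_β (the module H^*(C)/(c·H^*(C)) × Ann_{H^*(C)}(c) with action (m, n)·x = (mx + β(n,x), nx)) to H^*(cone(l_{s(c)})), given by (m, n) ↦ (image of m) + σ(n) with σ(n) = [(−q(c,n), s(n))], which carries the extension 0 → H^*(C)/(c·H^*(C)) → E_β → Ann_{H^*(C)}(c) → 0 to the extension in (i). In other words, the class of the cone extension is the image of the Hochschild class [θ] under the canonical map to the extension group. -/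

import Mathlib

/-!
Write `σ(x) = (-q(c,x), s(x))`; for `cx = 0` it is a cocycle of the cone. A cocycle `(a, b)` of
the cone has `c·[b] = 0`, and after subtracting `σ([b])` and a boundary it becomes `(e, 0)` with
`e` a cocycle of `C`; so `σ` splits the projection onto `Ann(c)`, while `(s(u), 0)` bounds exactly
when `u ∈ cH`. Right multiplication by `s(y)` sends `σ(x)` to `σ(xy) + (θ(c,x,y), 0)` up to a
boundary, which is the twisted action on `E_β`. For (ii): when `cx = 0`, the Hochschild
coboundary of `Θ` at `(c,x,y,z)` is `(-1)^|c| s(c) Θ(x,y,z)` plus the boundary of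
`∓ q(c,x) q(y,z)`.
-/

/-- `Qmap s q x y` is the cochain `q(x,y) := q(s(x)s(y) - s(xy))`. -/
def Qmap {k C H : Type} [CommRing k] [Ring C] [Algebra k C] [Ring H] [Algebra k H]
    (s : H →ₗ[k] C) (q : C → C) (x y : H) : C :=
  q (s x * s y - s (x * y))

/-- `Theta s q i x y z` is the expression
`Θ(x,y,z) = (-1)^{|x|} s(x) q(y,z) - q(xy,z) + q(x,yz) - q(x,y) s(z)`,
where `i = |x|` is the degree of `x`. -/
def Theta {k C H : Type} [CommRing k] [Ring C] [Algebra k C] [Ring H] [Algebra k H]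
    (s : H →ₗ[k] C) (q : C → C) (i : ℕ) (x y z : H) : C :=
  ((-1 : ℤ) ^ i) • (s x * Qmap s q y z) - Qmap s q (x * y) z
    + Qmap s q x (y * z) - Qmap s q x y * s z

/-- The differential of the mapping cone `cone(l_{s(c)})`, where `m = |c|`:
`D(u,v) = (d u + s(c) v, (-1)^{|c|-1} d v)` (note `(-1)^(m+1) = (-1)^(m-1)`). -/
def Dcone {k C H : Type} [CommRing k] [Ring C] [Algebra k C] [Ring H] [Algebra k H]
    (d : C →ₗ[k] C) (s : H →ₗ[k] C) (c : H) (m : ℕ) (p : C × C) : C × C :=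
  (d p.1 + s c * p.2, ((-1 : ℤ) ^ (m + 1)) • d p.2)

/-- On the cocycles of `D`, `π` is additive with kernel the boundaries; its other values play no
role. -/
structure IsCohomologyProjection {M N F : Type*} [AddCommGroup M] [AddCommGroup N]
    [FunLike F M M] (D : F) (π : M → N) : Prop where
  D_D : ∀ x, D (D x) = 0
  map_add : ∀ x y, D x = 0 → D y = 0 → π (x + y) = π x + π y
  eq_zero_iff : ∀ x, D x = 0 → (π x = 0 ↔ ∃ y, D y = x)

namespace IsCohomologyProjection

variable {M N F : Type*} [AddCommGroup M] [AddCommGroup N] [FunLike F M M] {D : F} {π : M → N}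
  (h : IsCohomologyProjection D π)
include h

theorem map_boundary (y : M) : π (D y) = 0 :=
  (h.eq_zero_iff _ (h.D_D y)).2 ⟨y, rfl⟩

theorem map_add_boundary {x : M} (hx : D x = 0) (y : M) : π (x + D y) = π x := by
  rw [h.map_add _ _ hx (h.D_D y), h.map_boundary, add_zero]

variable [AddMonoidHomClass F M M]

theorem map_zero : π 0 = 0 := by
  simpa using h.map_boundary 0

theorem map_neg {x : M} (hx : D x = 0) : π (-x) = -π x := by
  have hx' : D (-x) = 0 := by rw [_root_.map_neg, hx, neg_zero]
  refine eq_neg_of_add_eq_zero_left ?_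
  rw [← h.map_add _ _ hx' hx, neg_add_cancel, h.map_zero]

theorem map_sub {x y : M} (hx : D x = 0) (hy : D y = 0) : π (x - y) = π x - π y := by
  have hy' : D (-y) = 0 := by rw [_root_.map_neg, hy, neg_zero]
  rw [sub_eq_add_neg, h.map_add _ _ hx hy', h.map_neg hy, sub_eq_add_neg]

end IsCohomologyProjection

structure IsGradedDerivation {k C : Type} [CommRing k] [Ring C] [Algebra k C]
    (𝒜 : ℕ → Submodule k C) (d : C →ₗ[k] C) : Prop where
  mem : ∀ i, ∀ x ∈ 𝒜 i, d x ∈ 𝒜 (i + 1)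
  leibniz : ∀ i, ∀ x ∈ 𝒜 i, ∀ y, d (x * y) = d x * y + ((-1 : ℤ) ^ i) • (x * d y)

namespace IsGradedDerivation

variable {k C : Type} [CommRing k] [Ring C] [Algebra k C]
  {𝒜 : ℕ → Submodule k C} {d : C →ₗ[k] C} (hd : IsGradedDerivation 𝒜 d)
include hd

theorem map_mul_of_map_eq_zero [GradedAlgebra 𝒜] (a : C) {b : C} (hb : d b = 0) :
    d (a * b) = d a * b := by
  induction a using DirectSum.Decomposition.inductionOn 𝒜 with
  | zero => simp
  | homogeneous ha => rw [hd.leibniz _ _ ha.2, hb, mul_zero, smul_zero, add_zero]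
  | add a a' ha ha' => rw [add_mul, map_add, map_add, add_mul, ha, ha']

theorem map_mul_of_mem_of_map_eq_zero {i : ℕ} {a : C} (ha : a ∈ 𝒜 i) (hda : d a = 0) (b : C) :
    d (a * b) = ((-1 : ℤ) ^ i) • (a * d b) := by
  rw [hd.leibniz i a ha, hda, zero_mul, zero_add]

theorem map_eq_zero_of_map_mem_zero [GradedAlgebra 𝒜] {w : C} (hw : d w ∈ 𝒜 0) : d w = 0 := by
  have hcomp : ∀ w : C, (DirectSum.decompose 𝒜 (d w) 0 : C) = 0 := by
    intro w
    induction w using DirectSum.Decomposition.inductionOn 𝒜 with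
    | zero => simp
    | homogeneous hx => exact DirectSum.decompose_of_mem_ne 𝒜 (hd.mem _ _ hx.2) (by omega)
    | add u v hu hv => simp [hu, hv]
  rw [← DirectSum.decompose_of_mem_same 𝒜 hw, hcomp]

end IsGradedDerivation

structure IsCohomologySplitting {k C H : Type} [CommRing k] [Ring C] [Algebra k C] [Ring H]
    [Algebra k H] (𝒜 : ℕ → Submodule k C) (ℋ : ℕ → Submodule k H) (d : C →ₗ[k] C) (π : C → H)
    (s : H →ₗ[k] C) (q : C → C) : Prop
    extends IsCohomologyProjection d π where
  map_mul : ∀ x y, d x = 0 → d y = 0 → π (x * y) = π x * π y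
  d_s : ∀ h, d (s h) = 0
  π_s : ∀ h, π (s h) = h
  s_mem : ∀ i, ∀ h ∈ ℋ i, s h ∈ 𝒜 i
  d_q : ∀ x, (∃ y, d y = x) → d (q x) = x
  q_add : ∀ x y, (∃ u, d u = x) → (∃ v, d v = y) → q (x + y) = q x + q y
  q_mem : ∀ i x, (∃ y, d y = x) → x ∈ 𝒜 (i + 1) → q x ∈ 𝒜 i

namespace IsCohomologySplitting

variable {k C H : Type} [CommRing k] [Ring C] [Algebra k C] [Ring H] [Algebra k H]
  {𝒜 : ℕ → Submodule k C} {ℋ : ℕ → Submodule k H} {d : C →ₗ[k] C} {π : C → H}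
  {s : H →ₗ[k] C} {q : C → C} (hS : IsCohomologySplitting 𝒜 ℋ d π s q)
include hS

theorem q_zero : q 0 = 0 := by
  have h0 : ∃ y, d y = 0 := ⟨0, map_zero d⟩
  simpa using hS.q_add 0 0 h0 h0

theorem Qmap_zero_left (y : H) : Qmap s q 0 y = 0 := by
  simp [Qmap, hS.q_zero]

theorem Qmap_zero_right (x : H) : Qmap s q x 0 = 0 := by
  simp [Qmap, hS.q_zero]

theorem exists_eq_s_add_d {x : C} (hx : d x = 0) : ∃ w, x = s (π x) + d w := by
  have hdiff : d (x - s (π x)) = 0 := by rw [map_sub, hx, hS.d_s, sub_zero]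
  obtain ⟨w, hw⟩ := (hS.eq_zero_iff _ hdiff).1 <| by
    rw [hS.map_sub hx (hS.d_s _), hS.π_s, sub_self]
  exact ⟨w, by rw [← sub_eq_iff_eq_add']; exact hw.symm⟩

theorem s_mul_s_sub_mem [SetLike.GradedMul 𝒜] [SetLike.GradedMul ℋ] {i j : ℕ} {x y : H}
    (hx : x ∈ ℋ i) (hy : y ∈ ℋ j) :
    s x * s y - s (x * y) ∈ 𝒜 (i + j) :=
  sub_mem (SetLike.mul_mem_graded (hS.s_mem i x hx) (hS.s_mem j y hy))
    (hS.s_mem _ _ (SetLike.mul_mem_graded hx hy))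

variable [GradedAlgebra 𝒜] (hd : IsGradedDerivation 𝒜 d)
include hd

theorem d_s_mul_s (x y : H) : d (s x * s y) = 0 := by
  rw [hd.map_mul_of_map_eq_zero _ (hS.d_s y), hS.d_s, zero_mul]

theorem d_Qmap (x y : H) : d (Qmap s q x y) = s x * s y - s (x * y) := by
  refine hS.d_q _ ((hS.eq_zero_iff _ ?_).1 ?_)
  · rw [map_sub, hS.d_s_mul_s hd, hS.d_s, sub_zero]
  · rw [hS.map_sub (hS.d_s_mul_s hd x y) (hS.d_s _), hS.map_mul _ _ (hS.d_s x) (hS.d_s y),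
      hS.π_s, hS.π_s, hS.π_s, sub_self]

theorem d_Theta {i : ℕ} {x : H} (hx : x ∈ ℋ i) (y z : H) : d (Theta s q i x y z) = 0 := by
  have hsx := hS.s_mem i x hx
  simp only [Theta, map_sub, map_add, map_zsmul, hd.map_mul_of_mem_of_map_eq_zero hsx (hS.d_s x),
    hd.map_mul_of_map_eq_zero _ (hS.d_s z), hS.d_Qmap hd, smul_smul, ← pow_add, ← two_mul,
    pow_mul, neg_one_sq, one_pow, one_smul, mul_assoc]
  noncomm_ring

variable [SetLike.GradedMul ℋ]

/-- `q(x, y)` behaves as an element of degree `|x| + |y| - 1`, also when that degree would be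
`-1`: then it vanishes, since `C` has no boundaries in degree `0`. -/
theorem d_Qmap_mul {i j : ℕ} {x y : H} (hx : x ∈ ℋ i) (hy : y ∈ ℋ j) (w : C) :
    d (Qmap s q x y * w)
      = (s x * s y - s (x * y)) * w - ((-1 : ℤ) ^ (i + j)) • (Qmap s q x y * d w) := by
  rcases Nat.eq_zero_or_pos (i + j) with h0 | hpos
  · have hmem := hS.s_mul_s_sub_mem hx hy
    rw [h0, ← hS.d_Qmap hd] at hmem
    have hbdry := hd.map_eq_zero_of_map_mem_zero hmem
    rw [hS.d_Qmap hd] at hbdry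
    simp [Qmap, hbdry, hS.q_zero]
  · obtain ⟨n, hn⟩ := Nat.exists_eq_add_one.2 hpos
    have hmem : Qmap s q x y ∈ 𝒜 n :=
      hS.q_mem n _ ⟨_, hS.d_Qmap hd x y⟩ (hn ▸ hS.s_mul_s_sub_mem hx hy)
    rw [hd.leibniz n _ hmem, hS.d_Qmap hd, hn, pow_succ, mul_neg_one, neg_smul, sub_neg_eq_add]

theorem Theta_coboundary_eq {m i : ℕ} {c x : H} (hc : c ∈ ℋ m) (hx : x ∈ ℋ i) (hcx : c * x = 0)
    (y z : H) :
    Theta s q m c x (y * z) - Theta s q m c (x * y) z - Theta s q m c x y * s z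
      = ((-1 : ℤ) ^ m) • (s c * Theta s q i x y z)
        + d (-((-1 : ℤ) ^ (m + i)) • (Qmap s q c x * Qmap s q y z)) := by
  rw [map_zsmul, hS.d_Qmap_mul hd hc hx, hS.d_Qmap hd, hcx]
  simp only [Theta, ← mul_assoc, hcx, zero_mul, hS.Qmap_zero_left, map_zero, sub_zero, pow_add]
  rcases Nat.even_or_odd m with hm | hm <;> rcases Nat.even_or_odd i with hi | hi <;>
    simp only [hm.neg_one_pow, hi.neg_one_pow] <;> noncomm_ring

theorem exists_π_Theta_coboundary_eq_mul {m i : ℕ} {c x : H} (hc : c ∈ ℋ m) (hx : x ∈ ℋ i)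
    (hcx : c * x = 0) (y z : H) :
    ∃ u, π (Theta s q m c x (y * z)) - π (Theta s q m c (x * y) z)
      - π (Theta s q m c x y) * z = c * u := by
  have hT := hS.d_Theta hd hc
  have hTz : d (Theta s q m c x y * s z) = 0 := by
    rw [hd.map_mul_of_map_eq_zero _ (hS.d_s z), hT, zero_mul]
  have hεT : d (((-1 : ℤ) ^ m) • Theta s q i x y z) = 0 := by
    rw [map_zsmul, hS.d_Theta hd hx, smul_zero]
  have hπ : π (Theta s q m c x (y * z)) - π (Theta s q m c (x * y) z) - π (Theta s q m c x y) * z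
      = π (Theta s q m c x (y * z) - Theta s q m c (x * y) z - Theta s q m c x y * s z) := by
    rw [hS.map_sub (by rw [map_sub, hT, hT, sub_zero]) hTz, hS.map_sub (hT _ _) (hT _ _),
      hS.map_mul _ _ (hT _ _) (hS.d_s z), hS.π_s]
  refine ⟨π (((-1 : ℤ) ^ m) • Theta s q i x y z), ?_⟩
  rw [hπ, hS.Theta_coboundary_eq hd hc hx hcx, ← mul_smul_comm]
  refine (hS.map_add_boundary ?_ _).trans ?_
  · rw [hd.map_mul_of_map_eq_zero _ hεT, hS.d_s, zero_mul]
  · rw [hS.map_mul _ _ (hS.d_s c) hεT, hS.π_s]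

end IsCohomologySplitting

theorem neg_one_pow_smul_neg_one_pow_smul {M : Type*} [AddCommGroup M] (n : ℕ) (x : M) :
    ((-1 : ℤ) ^ n) • ((-1 : ℤ) ^ n) • x = x := by
  rw [smul_smul, ← mul_pow, neg_one_mul, neg_neg, one_pow, one_smul]

section Cone

variable {k C H : Type} [CommRing k] [Ring C] [Algebra k C] [Ring H] [Algebra k H]
  {𝒜 : ℕ → Submodule k C} {ℋ : ℕ → Submodule k H} {d : C →ₗ[k] C} {π : C → H}
  {s : H →ₗ[k] C} {q : C → C} {c : H} {m : ℕ}

def coneDifferential (d : C →ₗ[k] C) (s : H →ₗ[k] C) (c : H) (m : ℕ) : C × C →+ C × C where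
  toFun := Dcone d s c m
  map_zero' := by simp [Dcone]
  map_add' p r := by
    simp only [Dcone, Prod.fst_add, Prod.snd_add, map_add, mul_add, smul_add, Prod.mk_add_mk]
    abel_nf

theorem coneDifferential_apply (p : C × C) : coneDifferential d s c m p = Dcone d s c m p := rfl

theorem Dcone_add (p r : C × C) : Dcone d s c m (p + r) = Dcone d s c m p + Dcone d s c m r :=
  map_add (coneDifferential d s c m) p r

theorem Dcone_eq_iff {p : C × C} {a b : C} :
    Dcone d s c m p = (a, b) ↔ d p.1 + s c * p.2 = a ∧ d p.2 = ((-1 : ℤ) ^ (m + 1)) • b := by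
  rw [Dcone, Prod.mk.injEq]
  refine and_congr Iff.rfl ⟨fun h => ?_, fun h => ?_⟩
  · rw [← h, neg_one_pow_smul_neg_one_pow_smul]
  · rw [h, neg_one_pow_smul_neg_one_pow_smul]

theorem Dcone_eq_zero_iff {p : C × C} :
    Dcone d s c m p = 0 ↔ d p.1 + s c * p.2 = 0 ∧ d p.2 = 0 := by
  rw [← Prod.mk_zero_zero, Dcone_eq_iff, smul_zero]

theorem Dcone_mk_zero (w : C) : Dcone d s c m (w, 0) = (d w, 0) := by
  simp [Dcone]

theorem Dcone_zero_mk_smul (w : C) :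
    Dcone d s c m (0, ((-1 : ℤ) ^ (m + 1)) • w) = (s c * ((-1 : ℤ) ^ (m + 1)) • w, d w) := by
  simp only [Dcone, map_zero, zero_add, map_zsmul, neg_one_pow_smul_neg_one_pow_smul]

theorem Dcone_mul_s [GradedAlgebra 𝒜] (hd : IsGradedDerivation 𝒜 d) (hs : ∀ h, d (s h) = 0)
    {p : C × C} (hp : Dcone d s c m p = 0) (y : H) :
    Dcone d s c m (p.1 * s y, p.2 * s y) = 0 := by
  rw [Dcone_eq_zero_iff] at hp ⊢
  simp only [hd.map_mul_of_map_eq_zero _ (hs y), ← mul_assoc, ← add_mul, hp, zero_mul, and_self]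

variable (hS : IsCohomologySplitting 𝒜 ℋ d π s q)
include hS

theorem Dcone_s_zero (u : H) : Dcone d s c m (s u, 0) = 0 := by
  simp [Dcone, hS.d_s]

theorem Dcone_Dcone (hc : c ∈ ℋ m) (hd : IsGradedDerivation 𝒜 d) (p : C × C) :
    Dcone d s c m (Dcone d s c m p) = 0 := by
  have hsc := hd.map_mul_of_mem_of_map_eq_zero (hS.s_mem m c hc) (hS.d_s c)
  simp only [Dcone, map_add, map_zsmul, hS.D_D, hsc, mul_smul_comm, pow_succ, smul_zero,
    zero_add, Prod.mk_eq_zero, and_true]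
  rw [mul_neg_one, neg_smul, add_neg_cancel]

variable [GradedAlgebra 𝒜] (hd : IsGradedDerivation 𝒜 d)
include hd

theorem Dcone_sigma (x : H) : Dcone d s c m (-(Qmap s q c x), s x) = (s (c * x), 0) := by
  simp [Dcone, hS.d_Qmap hd, hS.d_s]

theorem Dcone_sigma_of_mul_eq_zero {x : H} (hcx : c * x = 0) :
    Dcone d s c m (-(Qmap s q c x), s x) = 0 := by
  rw [Dcone_sigma hS hd, hcx, map_zero, Prod.mk_zero_zero]

theorem mul_π_snd_eq_zero {p : C × C} (hp : Dcone d s c m p = 0) : c * π p.2 = 0 := by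
  obtain ⟨h1, h2⟩ := Dcone_eq_zero_iff.1 hp
  have hcp : d (s c * p.2) = 0 := by rw [hd.map_mul_of_map_eq_zero _ h2, hS.d_s, zero_mul]
  rw [← hS.π_s c, ← hS.map_mul _ _ (hS.d_s c) h2, hS.eq_zero_iff _ hcp]
  exact ⟨-p.1, by rw [map_neg, neg_eq_iff_add_eq_zero, h1]⟩

theorem Dcone_s_add_sigma {x : H} (hcx : c * x = 0) (u : H) :
    Dcone d s c m (s u - Qmap s q c x, s x) = 0 := by
  rw [sub_eq_add_neg, ← zero_add (s x), ← Prod.mk_add_mk, Dcone_add, Dcone_s_zero hS,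
    Dcone_sigma_of_mul_eq_zero hS hd hcx, add_zero]

theorem ψ_ρ {Hc : Type} {πc : C × C → Hc} {ρ : Hc → H → Hc} {ψ : Hc → H}
    (hρ : ∀ p y, Dcone d s c m p = 0 → ρ (πc p) y = πc (p.1 * s y, p.2 * s y))
    (hψ : ∀ p, Dcone d s c m p = 0 → ψ (πc p) = π p.2)
    (hsurj : ∀ w, ∃ p, Dcone d s c m p = 0 ∧ πc p = w) (w : Hc) (y : H) :
    ψ (ρ w y) = ψ w * y := by
  obtain ⟨p, hp, rfl⟩ := hsurj w
  rw [hρ p y hp, hψ _ (Dcone_mul_s hd hS.d_s hp y), hψ p hp,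
    hS.map_mul _ _ (Dcone_eq_zero_iff.1 hp).2 (hS.d_s y), hS.π_s]

end Cone

section ConeCohomology

variable {k C H : Type} [CommRing k] [Ring C] [Algebra k C] [Ring H] [Algebra k H]
  {𝒜 : ℕ → Submodule k C} {ℋ : ℕ → Submodule k H} {d : C →ₗ[k] C} {π : C → H}
  {s : H →ₗ[k] C} {q : C → C} {c : H} {m : ℕ} (hS : IsCohomologySplitting 𝒜 ℋ d π s q)
  {Hc : Type} [AddCommGroup Hc] {πc : C × C → Hc}
  (hK : IsCohomologyProjection (coneDifferential d s c m) πc)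
include hS hK

theorem πc_mk_zero {e : C} (he : d e = 0) : πc (e, 0) = πc (s (π e), 0) := by
  obtain ⟨w, hw⟩ := hS.exists_eq_s_add_d he
  have h : (e, (0 : C)) = (s (π e), 0) + coneDifferential d s c m (w, 0) := by
    rw [coneDifferential_apply, Dcone_mk_zero, Prod.mk_add_mk, add_zero, ← hw]
  rw [h, hK.map_add_boundary (Dcone_s_zero hS _)]

theorem πc_s_add_πc_sigma_zero (u : H) :
    πc (s u, 0) + πc (-(Qmap s q c 0), s 0) = πc (s u, 0) := by
  rw [hS.Qmap_zero_right, neg_zero, map_zero, Prod.mk_zero_zero, hK.map_zero, add_zero]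

variable [GradedAlgebra 𝒜] (hd : IsGradedDerivation 𝒜 d)
include hd

theorem πc_s_mul (u y : H) : πc (s u * s y, 0) = πc (s (u * y), 0) := by
  have h : (s u * s y, (0 : C)) = (s (u * y), 0) + coneDifferential d s c m (Qmap s q u y, 0) := by
    rw [coneDifferential_apply, Dcone_mk_zero, hS.d_Qmap hd, Prod.mk_add_mk, add_zero,
      add_sub_cancel]
  rw [h, hK.map_add_boundary (Dcone_s_zero hS _)]

theorem πc_s_eq_zero_iff (u : H) : πc (s u, 0) = 0 ↔ ∃ v, u = c * v := by
  rw [hK.eq_zero_iff _ (Dcone_s_zero hS u)]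
  constructor
  · rintro ⟨r, hr⟩
    obtain ⟨h1, h2⟩ := Dcone_eq_iff.1 hr
    rw [smul_zero] at h2
    refine ⟨π r.2, ?_⟩
    calc u = π (s c * r.2 + d r.1) := by rw [add_comm, h1, hS.π_s]
      _ = π (s c * r.2) :=
        hS.map_add_boundary (by rw [hd.map_mul_of_map_eq_zero _ h2, hS.d_s, zero_mul]) _
      _ = c * π r.2 := by rw [hS.map_mul _ _ (hS.d_s c) h2, hS.π_s]
  · rintro ⟨v, rfl⟩
    exact ⟨(-(Qmap s q c v), s v), Dcone_sigma hS hd v⟩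

theorem exists_πc_eq_add_sigma {p : C × C} (hp : Dcone d s c m p = 0) :
    ∃ u, πc p = πc (s u, 0) + πc (-(Qmap s q c (π p.2)), s (π p.2)) := by
  obtain ⟨w, hw⟩ := hS.exists_eq_s_add_d (Dcone_eq_zero_iff.1 hp).2
  have hσ := Dcone_sigma_of_mul_eq_zero (m := m) hS hd (mul_π_snd_eq_zero hS hd hp)
  set e := p.1 + Qmap s q c (π p.2) - s c * ((-1 : ℤ) ^ (m + 1)) • w
  have hp' : p = ((e, 0) + (-(Qmap s q c (π p.2)), s (π p.2)))
      + coneDifferential d s c m (0, ((-1 : ℤ) ^ (m + 1)) • w) := by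
    rw [coneDifferential_apply, Dcone_zero_mk_smul, Prod.mk_add_mk, Prod.mk_add_mk, zero_add, ← hw]
    ext
    · simp only [e]
      abel
    · rfl
  have he : Dcone d s c m (e, 0) = 0 := by
    have h := congrArg (Dcone d s c m) hp'
    rwa [Dcone_add, Dcone_add, show Dcone d s c m (coneDifferential d s c m _) = 0 from hK.D_D _,
      hp, hσ, add_zero, add_zero, eq_comm] at h
  have hsum : Dcone d s c m ((e, 0) + (-(Qmap s q c (π p.2)), s (π p.2))) = 0 := by
    rw [Dcone_add, he, hσ, add_zero]
  refine ⟨π e, ?_⟩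
  rw [congrArg πc hp', hK.map_add_boundary hsum, hK.map_add _ _ he hσ,
    πc_mk_zero hS hK (by simpa using (Dcone_eq_zero_iff.1 he).1)]

theorem πc_s_add_πc_sigma {x : H} (hcx : c * x = 0) (u : H) :
    πc (s u, 0) + πc (-(Qmap s q c x), s x) = πc (s u - Qmap s q c x, s x) := by
  rw [← hK.map_add _ _ (Dcone_s_zero hS u) (Dcone_sigma_of_mul_eq_zero hS hd hcx), Prod.mk_add_mk,
    sub_eq_add_neg, zero_add]

theorem πc_sub_Qmap_mul_s (hc : c ∈ ℋ m) {x : H} (hcx : c * x = 0) (u y : H) :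
    πc ((s u - Qmap s q c x) * s y, s x * s y)
      = πc (s (u * y + π (Theta s q m c x y)), 0) + πc (-(Qmap s q c (x * y)), s (x * y)) := by
  have hcxy : c * (x * y) = 0 := by rw [← mul_assoc, hcx, zero_mul]
  obtain ⟨t, ht⟩ := hS.exists_eq_s_add_d (hS.d_Theta hd hc x y)
  have hsΘ : s (π (Theta s q m c x y)) = Theta s q m c x y - d t := eq_sub_of_add_eq ht.symm
  have h : ((s u - Qmap s q c x) * s y, s x * s y)
      = (s (u * y + π (Theta s q m c x y)) - Qmap s q c (x * y), s (x * y))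
        + coneDifferential d s c m (Qmap s q u y + t, ((-1 : ℤ) ^ (m + 1)) • Qmap s q x y) := by
    rw [coneDifferential_apply, Dcone, map_add d, map_zsmul, neg_one_pow_smul_neg_one_pow_smul,
      hS.d_Qmap hd, hS.d_Qmap hd, map_add s, hsΘ, Prod.mk_add_mk, add_sub_cancel]
    congr 1
    simp only [Theta, hcx, hS.Qmap_zero_left, pow_succ, neg_smul, mul_neg,
      mul_smul_comm]
    noncomm_ring
  rw [πc_s_add_πc_sigma hS hK hd hcxy, h, hK.map_add_boundary (Dcone_s_add_sigma hS hd hcxy _)]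

theorem ρ_πc_s {ρ : Hc → H → Hc}
    (hρ : ∀ p y, Dcone d s c m p = 0 → ρ (πc p) y = πc (p.1 * s y, p.2 * s y)) (u y : H) :
    ρ (πc (s u, 0)) y = πc (s (u * y), 0) := by
  rw [hρ _ y (Dcone_s_zero hS u), zero_mul, πc_s_mul hS hK hd]

theorem ρ_πc_s_add_πc_sigma (hc : c ∈ ℋ m) {ρ : Hc → H → Hc}
    (hρ : ∀ p y, Dcone d s c m p = 0 → ρ (πc p) y = πc (p.1 * s y, p.2 * s y)) {x : H}
    (hcx : c * x = 0) (u y : H) :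
    ρ (πc (s u, 0) + πc (-(Qmap s q c x), s x)) y
      = πc (s (u * y + π (Theta s q m c x y)), 0) + πc (-(Qmap s q c (x * y)), s (x * y)) := by
  rw [πc_s_add_πc_sigma hS hK hd hcx, hρ _ y (Dcone_s_add_sigma hS hd hcx u),
    πc_sub_Qmap_mul_s hS hK hd hc hcx]

theorem exists_eq_πc_s_add_πc_sigma (hsurj : ∀ w, ∃ p, Dcone d s c m p = 0 ∧ πc p = w) (w : Hc) :
    ∃ u x, c * x = 0 ∧ w = πc (s u, 0) + πc (-(Qmap s q c x), s x) := by
  obtain ⟨p, hp, rfl⟩ := hsurj w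
  obtain ⟨u, hu⟩ := exists_πc_eq_add_sigma hS hK hd hp
  exact ⟨u, π p.2, mul_π_snd_eq_zero hS hd hp, hu⟩

variable {ψ : Hc → H} (hψ : ∀ p, Dcone d s c m p = 0 → ψ (πc p) = π p.2)
include hψ

theorem ψ_πc_s_add_πc_sigma {x : H} (hcx : c * x = 0) (u : H) :
    ψ (πc (s u, 0) + πc (-(Qmap s q c x), s x)) = x := by
  rw [πc_s_add_πc_sigma hS hK hd hcx, hψ _ (Dcone_s_add_sigma hS hd hcx u), hS.π_s]

theorem πc_s_add_πc_sigma_inj {u u' x x' : H} (hcx : c * x = 0) (hcx' : c * x' = 0)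
    (h : πc (s u, 0) + πc (-(Qmap s q c x), s x) = πc (s u', 0) + πc (-(Qmap s q c x'), s x')) :
    x = x' ∧ ∃ v, u - u' = c * v := by
  obtain rfl : x = x' := by
    rw [← ψ_πc_s_add_πc_sigma hS hK hd hψ hcx u, h, ψ_πc_s_add_πc_sigma hS hK hd hψ hcx' u']
  refine ⟨rfl, (πc_s_eq_zero_iff hS hK hd _).1 ?_⟩
  rw [πc_s_add_πc_sigma hS hK hd hcx, πc_s_add_πc_sigma hS hK hd hcx] at h
  rw [← sub_eq_zero, ← hK.map_sub (Dcone_s_add_sigma hS hd hcx u)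
    (Dcone_s_add_sigma hS hd hcx u')] at h
  rwa [Prod.mk_sub_mk, sub_sub_sub_cancel_right, sub_self, ← map_sub] at h

theorem ψ_eq_zero_iff (hsurj : ∀ w, ∃ p, Dcone d s c m p = 0 ∧ πc p = w) (w : Hc) :
    ψ w = 0 ↔ ∃ u, w = πc (s u, 0) := by
  constructor
  · intro hw
    obtain ⟨u, x, hcx, rfl⟩ := exists_eq_πc_s_add_πc_sigma hS hK hd hsurj w
    obtain rfl : x = 0 := (ψ_πc_s_add_πc_sigma hS hK hd hψ hcx u).symm.trans hw
    exact ⟨u, πc_s_add_πc_sigma_zero hS hK u⟩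
  · rintro ⟨u, rfl⟩
    rw [hψ _ (Dcone_s_zero hS u), hS.map_zero]

theorem exists_ψ_eq_iff (hsurj : ∀ w, ∃ p, Dcone d s c m p = 0 ∧ πc p = w) (x : H) :
    (∃ w, ψ w = x) ↔ c * x = 0 := by
  constructor
  · rintro ⟨w, rfl⟩
    obtain ⟨u, x, hcx, rfl⟩ := exists_eq_πc_s_add_πc_sigma hS hK hd hsurj w
    rwa [ψ_πc_s_add_πc_sigma hS hK hd hψ hcx u]
  · intro hcx
    exact ⟨_, ψ_πc_s_add_πc_sigma hS hK hd hψ hcx 0⟩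

end ConeCohomology

theorem cone_extension_class_general (k : Type) [CommRing k]
    (C : Type) [Ring C] [Algebra k C]
    (𝒜 : ℕ → Submodule k C) [GradedAlgebra 𝒜]
    (d : C →ₗ[k] C)
    (hd2 : ∀ x : C, d (d x) = 0)
    (hddeg : ∀ (i : ℕ), ∀ x ∈ 𝒜 i, d x ∈ 𝒜 (i + 1))
    (hleib : ∀ (i : ℕ), ∀ x ∈ 𝒜 i, ∀ y : C,
      d (x * y) = d x * y + ((-1 : ℤ) ^ i) • (x * d y))
    (H : Type) [Ring H] [Algebra k H]
    (ℋ : ℕ → Submodule k H) [GradedAlgebra ℋ]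
    (π : C → H)
    (hπadd : ∀ x y : C, d x = 0 → d y = 0 → π (x + y) = π x + π y)
    (hπmul : ∀ x y : C, d x = 0 → d y = 0 → π (x * y) = π x * π y)
    (hπker : ∀ x : C, d x = 0 → (π x = 0 ↔ ∃ y : C, d y = x))
    (s : H →ₗ[k] C)
    (hs0 : ∀ h : H, d (s h) = 0)
    (hsπ : ∀ h : H, π (s h) = h)
    (hsdeg : ∀ (i : ℕ), ∀ h ∈ ℋ i, s h ∈ 𝒜 i)
    (q : C → C)
    (hqd : ∀ x : C, (∃ y, d y = x) → d (q x) = x)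
    (hqadd : ∀ x y : C, (∃ u, d u = x) → (∃ v, d v = y) → q (x + y) = q x + q y)
    (hqdeg : ∀ (i : ℕ), ∀ x : C, (∃ y, d y = x) → x ∈ 𝒜 (i + 1) → q x ∈ 𝒜 i)
    (m : ℕ) (c : H) (hc : c ∈ ℋ m)
    (Hc : Type) [AddCommGroup Hc]
    (πc : C × C → Hc)
    (hπcadd : ∀ p r : C × C, Dcone d s c m p = 0 → Dcone d s c m r = 0 →
      πc (p + r) = πc p + πc r)
    (hπcker : ∀ p : C × C, Dcone d s c m p = 0 → (πc p = 0 ↔ ∃ r, Dcone d s c m r = p))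
    (hπcsurj : ∀ w : Hc, ∃ p : C × C, Dcone d s c m p = 0 ∧ πc p = w)
    (ρ : Hc → H → Hc)
    (hρ : ∀ (p : C × C) (y : H), Dcone d s c m p = 0 →
      ρ (πc p) y = πc (p.1 * s y, p.2 * s y))
    (ψ : Hc → H)
    (hψ : ∀ p : C × C, Dcone d s c m p = 0 → ψ (πc p) = π p.2) :
    -- (i) the cone extension is a short exact sequence of right `H^*(C)`-modules
    ((∀ u y : H, ρ (πc (s u, 0)) y = πc (s (u * y), 0)) ∧
     (∀ u : H, πc (s u, 0) = 0 ↔ ∃ v : H, u = c * v) ∧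
     (∀ w : Hc, ψ w = 0 ↔ ∃ u : H, w = πc (s u, 0)) ∧
     (∀ x : H, (∃ w : Hc, ψ w = x) ↔ c * x = 0) ∧
     (∀ (w : Hc) (y : H), ψ (ρ w y) = ψ w * y)) ∧
    -- (ii) `β(x,y) = θ(c,x,y) mod cH` satisfies `β(x,yz) = β(xy,z) + β(x,y)z`
    (∀ (i j l : ℕ) (x y z : H), x ∈ ℋ i → y ∈ ℋ j → z ∈ ℋ l → c * x = 0 →
      ∃ u : H, π (Theta s q m c x (y * z)) - π (Theta s q m c (x * y) z)
          - π (Theta s q m c x y) * z = c * u) ∧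
    -- (iii) `(u,x) ↦ [s(u),0] + σ(x)` is an isomorphism of right `H^*(C)`-modules
    -- from `E_β` onto `H^*(cone(l_{s(c)}))`, compatible with the two extensions
    ((∀ w : Hc, ∃ u x : H, c * x = 0 ∧
        w = πc (s u, 0) + πc (-(Qmap s q c x), s x)) ∧
     (∀ u u' x x' : H, c * x = 0 → c * x' = 0 →
        πc (s u, 0) + πc (-(Qmap s q c x), s x)
          = πc (s u', 0) + πc (-(Qmap s q c x'), s x') →
        x = x' ∧ ∃ v : H, u - u' = c * v) ∧
     (∀ u x y : H, c * x = 0 →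
        πc (s (u * y + π (Theta s q m c x y)), 0)
            + πc (-(Qmap s q c (x * y)), s (x * y))
          = ρ (πc (s u, 0) + πc (-(Qmap s q c x), s x)) y) ∧
     (∀ u : H, πc (s u, 0) + πc (-(Qmap s q c 0), s 0) = πc (s u, 0)) ∧
     (∀ u x : H, c * x = 0 →
        ψ (πc (s u, 0) + πc (-(Qmap s q c x), s x)) = x)) := by
  have hd : IsGradedDerivation 𝒜 d := ⟨hddeg, hleib⟩
  have hS : IsCohomologySplitting 𝒜 ℋ d π s q :=
    ⟨⟨hd2, hπadd, hπker⟩, hπmul, hs0, hsπ, hsdeg, hqd, hqadd, hqdeg⟩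
  have hK : IsCohomologyProjection (coneDifferential d s c m) πc :=
    ⟨Dcone_Dcone hS hc hd, hπcadd, hπcker⟩
  exact ⟨⟨ρ_πc_s hS hK hd hρ, πc_s_eq_zero_iff hS hK hd, ψ_eq_zero_iff hS hK hd hψ hπcsurj,
      exists_ψ_eq_iff hS hK hd hψ hπcsurj, ψ_ρ hS hd hρ hψ hπcsurj⟩,
    fun _ _ _ x y z hx _ _ hcx => hS.exists_π_Theta_coboundary_eq_mul hd hc hx hcx y z,
    ⟨exists_eq_πc_s_add_πc_sigma hS hK hd hπcsurj,
      fun _ _ _ _ => πc_s_add_πc_sigma_inj hS hK hd hψ,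
      fun u _ y hcx => (ρ_πc_s_add_πc_sigma hS hK hd hc hρ hcx u y).symm,
      πc_s_add_πc_sigma_zero hS hK,
      fun u _ hcx => ψ_πc_s_add_πc_sigma hS hK hd hψ hcx u⟩⟩

/-- **The class of the cone extension is the image of the Hochschild class `[θ]`.**
For homogeneous `c ∈ H^*(C)`:
(i) `0 → H^*(C)/(c·H^*(C)) → H^*(cone(l_{s(c)})) → Ann(c) → 0` is a short exact
sequence of right `H^*(C)`-modules, where the first map is `u ↦ [(s(u), 0)]` (induced
by the inclusion `C → cone(l_{s(c)})`) and the second is induced by the projection;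
(ii) `β(x,y) := θ(c,x,y) mod c·H^*(C)` satisfies `β(x,yz) = β(xy,z) + β(x,y)z`;
(iii) `(u, x) ↦ [s(u),0] + σ(x)`, with `σ(x) = [(-q(c,x), s(x))]`, is an isomorphism
of right `H^*(C)`-modules from `E_β` to `H^*(cone(l_{s(c)}))` compatible with the two
extensions. -/
theorem cone_extension_class (k : Type) [CommRing k]
    (C : Type) [Ring C] [Algebra k C]
    (𝒜 : ℕ → Submodule k C) [GradedAlgebra 𝒜]
    (d : C →ₗ[k] C)
    (hd2 : ∀ x : C, d (d x) = 0)
    (hddeg : ∀ (i : ℕ), ∀ x ∈ 𝒜 i, d x ∈ 𝒜 (i + 1))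
    (hleib : ∀ (i : ℕ), ∀ x ∈ 𝒜 i, ∀ y : C,
      d (x * y) = d x * y + ((-1 : ℤ) ^ i) • (x * d y))
    (H : Type) [Ring H] [Algebra k H]
    (ℋ : ℕ → Submodule k H) [GradedAlgebra ℋ]
    (π : C → H)
    (hπadd : ∀ x y : C, d x = 0 → d y = 0 → π (x + y) = π x + π y)
    (hπsmul : ∀ (a : k) (x : C), d x = 0 → π (a • x) = a • π x)
    (hπmul : ∀ x y : C, d x = 0 → d y = 0 → π (x * y) = π x * π y)
    (hπone : π 1 = 1)
    (hπdeg : ∀ (i : ℕ), ∀ x ∈ 𝒜 i, d x = 0 → π x ∈ ℋ i)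
    (hπker : ∀ x : C, d x = 0 → (π x = 0 ↔ ∃ y : C, d y = x))
    (hπsurj : ∀ h : H, ∃ x : C, d x = 0 ∧ π x = h)
    (s : H →ₗ[k] C)
    (hs0 : ∀ h : H, d (s h) = 0)
    (hsπ : ∀ h : H, π (s h) = h)
    (hsdeg : ∀ (i : ℕ), ∀ h ∈ ℋ i, s h ∈ 𝒜 i)
    (q : C → C)
    (hqd : ∀ x : C, (∃ y, d y = x) → d (q x) = x)
    (hqadd : ∀ x y : C, (∃ u, d u = x) → (∃ v, d v = y) → q (x + y) = q x + q y)
    (hqsmul : ∀ (a : k) (x : C), (∃ y, d y = x) → q (a • x) = a • q x)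
    (hqdeg : ∀ (i : ℕ), ∀ x : C, (∃ y, d y = x) → x ∈ 𝒜 (i + 1) → q x ∈ 𝒜 i)
    (m : ℕ) (c : H) (hc : c ∈ ℋ m)
    (Hc : Type) [AddCommGroup Hc] [Module k Hc]
    (πc : C × C → Hc)
    (hπcadd : ∀ p r : C × C, Dcone d s c m p = 0 → Dcone d s c m r = 0 →
      πc (p + r) = πc p + πc r)
    (hπcsmul : ∀ (a : k) (p : C × C), Dcone d s c m p = 0 → πc (a • p) = a • πc p)
    (hπcker : ∀ p : C × C, Dcone d s c m p = 0 → (πc p = 0 ↔ ∃ r, Dcone d s c m r = p))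
    (hπcsurj : ∀ w : Hc, ∃ p : C × C, Dcone d s c m p = 0 ∧ πc p = w)
    (ρ : Hc → H → Hc)
    (hρ : ∀ (p : C × C) (y : H), Dcone d s c m p = 0 →
      ρ (πc p) y = πc (p.1 * s y, p.2 * s y))
    (ψ : Hc → H)
    (hψ : ∀ p : C × C, Dcone d s c m p = 0 → ψ (πc p) = π p.2) :
    -- (i) the cone extension is a short exact sequence of right `H^*(C)`-modules
    ((∀ u y : H, ρ (πc (s u, 0)) y = πc (s (u * y), 0)) ∧
     (∀ u : H, πc (s u, 0) = 0 ↔ ∃ v : H, u = c * v) ∧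
     (∀ w : Hc, ψ w = 0 ↔ ∃ u : H, w = πc (s u, 0)) ∧
     (∀ x : H, (∃ w : Hc, ψ w = x) ↔ c * x = 0) ∧
     (∀ (w : Hc) (y : H), ψ (ρ w y) = ψ w * y)) ∧
    -- (ii) `β(x,y) = θ(c,x,y) mod cH` satisfies `β(x,yz) = β(xy,z) + β(x,y)z`
    (∀ (i j l : ℕ) (x y z : H), x ∈ ℋ i → y ∈ ℋ j → z ∈ ℋ l → c * x = 0 →
      ∃ u : H, π (Theta s q m c x (y * z)) - π (Theta s q m c (x * y) z)
          - π (Theta s q m c x y) * z = c * u) ∧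
    -- (iii) `(u,x) ↦ [s(u),0] + σ(x)` is an isomorphism of right `H^*(C)`-modules
    -- from `E_β` onto `H^*(cone(l_{s(c)}))`, compatible with the two extensions
    ((∀ w : Hc, ∃ u x : H, c * x = 0 ∧
        w = πc (s u, 0) + πc (-(Qmap s q c x), s x)) ∧
     (∀ u u' x x' : H, c * x = 0 → c * x' = 0 →
        πc (s u, 0) + πc (-(Qmap s q c x), s x)
          = πc (s u', 0) + πc (-(Qmap s q c x'), s x') →
        x = x' ∧ ∃ v : H, u - u' = c * v) ∧
     (∀ u x y : H, c * x = 0 →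
        πc (s (u * y + π (Theta s q m c x y)), 0)
            + πc (-(Qmap s q c (x * y)), s (x * y))
          = ρ (πc (s u, 0) + πc (-(Qmap s q c x), s x)) y) ∧
     (∀ u : H, πc (s u, 0) + πc (-(Qmap s q c 0), s 0) = πc (s u, 0)) ∧
     (∀ u x : H, c * x = 0 →
        ψ (πc (s u, 0) + πc (-(Qmap s q c x), s x)) = x)) :=
  cone_extension_class_general k C 𝒜 d hd2 hddeg hleib H ℋ π hπadd hπmul hπker s hs0 hsπ hsdeg q hqd
    hqadd hqdeg m c hc Hc πc hπcadd hπcker hπcsurj ρ hρ ψ hψ
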